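/- For two token-placements f and f' on a graph G, a swapping sequence from f to f' exists if and only if for every connected component of G and every color, the number of tokens of that color on the component is the same under f and f'. -/
import Mathlib


/-- `f'` is obtained from `f` by swapping the tokens on two adjacent vertices. -/
def SwapStep {V C : Type*} (G : SimpleGraph V) (f f' : V → C) : Prop :=
  ∃ u v, G.Adj u v ∧ f' u = f v ∧ f' v = f u ∧ ∀ w, w ≠ u → w ≠ v → f' w = f w

/-- There is a swapping sequence of length `k` transforming `f` into `f'`. -/
def Reach {V C : Type*} (G : SimpleGraph V) (f f' : V → C) (k : ℕ) : Prop :=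
  ∃ g : ℕ → V → C, g 0 = f ∧ g k = f' ∧ ∀ i < k, SwapStep G (g i) (g (i + 1))

section Aux

open scoped Classical

variable {V C : Type*} {G : SimpleGraph V}

lemma swapStep_symm {f f' : V → C} (h : SwapStep G f f') : SwapStep G f' f := by
  obtain ⟨u, v, hadj, hu, hv, hw⟩ := h
  exact ⟨u, v, hadj, hv.symm, hu.symm, fun w h1 h2 => (hw w h1 h2).symm⟩

lemma swapStep_comp_swap (f : V → C) {u v : V} (h : G.Adj u v) :
    SwapStep G f (f ∘ Equiv.swap u v) := by
  refine ⟨u, v, h, ?_, ?_, ?_⟩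
  · simp
  · simp
  · intro w h1 h2
    simp [Equiv.swap_apply_of_ne_of_ne h1 h2]

lemma reach_symm {f f' : V → C} {k : ℕ} (h : Reach G f f' k) : Reach G f' f k := by
  obtain ⟨g, h0, hk, hs⟩ := h
  refine ⟨fun i => g (k - i), by simp [hk], by simp [h0], fun i hi => ?_⟩
  have h1 : k - i - 1 + 1 = k - i := by omega
  show SwapStep G (g (k - i)) (g (k - (i + 1)))
  have h2 : k - (i + 1) = k - i - 1 := by omega
  rw [h2]
  have := hs (k - i - 1) (by omega)
  rw [h1] at this
  exact swapStep_symm this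

lemma reach_trans {f f' f'' : V → C} {k l : ℕ} (h1 : Reach G f f' k)
    (h2 : Reach G f' f'' l) : Reach G f f'' (k + l) := by
  obtain ⟨g1, g10, g1k, hs1⟩ := h1
  obtain ⟨g2, g20, g2l, hs2⟩ := h2
  classical
  refine ⟨fun i => if i < k then g1 i else g2 (i - k), ?_, ?_, ?_⟩
  · by_cases hk : 0 < k
    · simp [hk, g10]
    · have hk0 : k = 0 := by omega
      simp only [hk0] at g1k
      simp [hk, g20, ← g1k, g10]
  · have : ¬ (k + l < k) := by omega
    simp [this, g2l]
  · intro i hi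
    by_cases hik : i < k
    · have hnext : (if i + 1 < k then g1 (i + 1) else g2 (i + 1 - k)) = g1 (i + 1) := by
        by_cases h' : i + 1 < k
        · simp [h']
        · have : i + 1 = k := by omega
          simp [h', this, g20, ← g1k]
      simp only [hik, if_true, hnext]
      exact hs1 i hik
    · have h1' : ¬ (i + 1 < k) := by omega
      have h2' : i + 1 - k = (i - k) + 1 := by omega
      simp only [hik, h1', if_false, h2']
      exact hs2 (i - k) (by omega)

/-- The set of swaps along edges of `G`. -/
def swapSet (G : SimpleGraph V) : Set (Equiv.Perm V) :=
  {σ | ∃ u v, G.Adj u v ∧ σ = Equiv.swap u v}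

lemma swap_mem_closure {x y : V} (h : G.Reachable x y) :
    Equiv.swap x y ∈ Subgroup.closure (swapSet G) := by
  obtain ⟨w⟩ := h
  induction w with
  | nil =>
    rw [Equiv.swap_self]
    exact one_mem _
  | @cons x z y hadj p ih =>
    by_cases hyx : y = x
    · subst hyx
      rw [Equiv.swap_self]
      exact one_mem _
    by_cases hyz : y = z
    · subst hyz
      exact Subgroup.subset_closure ⟨x, y, hadj, rfl⟩
    have hxz : Equiv.swap x z ∈ Subgroup.closure (swapSet G) :=
      Subgroup.subset_closure ⟨x, z, hadj, rfl⟩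
    have key : Equiv.swap x y =
        Equiv.swap x z * Equiv.swap z y * (Equiv.swap x z)⁻¹ := by
      rw [← Equiv.swap_apply_apply (Equiv.swap x z) z y, Equiv.swap_apply_right,
        Equiv.swap_apply_of_ne_of_ne hyx hyz]
    rw [key]
    exact mul_mem (mul_mem hxz ih) (inv_mem hxz)

lemma perm_mem_closure [Fintype V] :
    ∀ (n : ℕ) (π : Equiv.Perm V), (∀ x, G.Reachable x (π x)) →
      (Finset.univ.filter fun x => π x ≠ x).card ≤ n →
      π ∈ Subgroup.closure (swapSet G) := by
  classical
  intro n
  induction n with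
  | zero =>
    intro π hπ hcard
    have : π = 1 := by
      ext x
      by_contra hx
      have : x ∈ Finset.univ.filter fun x => π x ≠ x := by
        simp only [Finset.mem_filter, Finset.mem_univ, true_and]
        exact hx
      have := Finset.card_pos.mpr ⟨x, this⟩
      omega
    rw [this]; exact one_mem _
  | succ n ih =>
    intro π hπ hcard
    by_cases hfix : ∀ x, π x = x
    · have : π = 1 := by ext x; exact hfix x
      rw [this]; exact one_mem _
    push_neg at hfix
    obtain ⟨x, hx⟩ := hfix
    set τ := Equiv.swap x (π x) with hτdef
    have hτ : τ ∈ Subgroup.closure (swapSet G) := swap_mem_closure (hπ x)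
    set π' := τ * π with hπ'def
    have hπ'x : π' x = x := by
      simp [hπ'def, hτdef, Equiv.swap_apply_right]
    have hfixed : ∀ y, π y = y → π' y = y := by
      intro y hy
      by_cases hyx : y = x
      · subst hyx; exact hπ'x
      have hy1 : π y ≠ x := by rw [hy]; exact hyx
      have hy2 : π y ≠ π x := fun h => hyx (π.injective h)
      simp [hπ'def, Equiv.Perm.mul_apply, hτdef,
        Equiv.swap_apply_of_ne_of_ne hy1 hy2]
      exact hy
    have hπ' : ∀ y, G.Reachable y (π' y) := by
      intro y
      by_cases h1 : π y = x
      · have : π' y = π x := by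
          simp [hπ'def, Equiv.Perm.mul_apply, h1, hτdef, Equiv.swap_apply_left]
        rw [this]
        exact ((hπ y).trans (h1 ▸ hπ x))
      by_cases h2 : π y = π x
      · have hyx : y = x := π.injective h2
        subst hyx
        rw [hπ'x]
      · have : π' y = π y := by
          simp [hπ'def, Equiv.Perm.mul_apply, hτdef,
            Equiv.swap_apply_of_ne_of_ne h1 h2]
        rw [this]
        exact hπ y
    have hsub : (Finset.univ.filter fun y => π' y ≠ y) ⊆
        (Finset.univ.filter fun y => π y ≠ y).erase x := by
      intro y hy
      simp only [Finset.mem_filter, Finset.mem_univ, true_and] at hy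
      rw [Finset.mem_erase]
      constructor
      · intro hyx; subst hyx; exact hy hπ'x
      · simp only [Finset.mem_filter, Finset.mem_univ, true_and]
        intro hyfix
        exact hy (hfixed y hyfix)
    have hxmem : x ∈ Finset.univ.filter fun y => π y ≠ y := by
      simp only [Finset.mem_filter, Finset.mem_univ, true_and]
      exact hx
    have hcard' : (Finset.univ.filter fun y => π' y ≠ y).card ≤ n := by
      have h1 := Finset.card_le_card hsub
      have h2 := Finset.card_erase_of_mem hxmem
      have h3 := Finset.card_pos.mpr ⟨x, hxmem⟩
      omega
    have hmem' : π' ∈ Subgroup.closure (swapSet G) := ih π' hπ' hcard'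
    have : π = τ * π' := by
      rw [hπ'def, ← mul_assoc, hτdef, Equiv.swap_mul_self, one_mul]
    rw [this]
    exact mul_mem hτ hmem'

lemma reach_of_mem_closure {π : Equiv.Perm V}
    (hπ : π ∈ Subgroup.closure (swapSet G)) :
    ∀ f : V → C, ∃ k, Reach G f (f ∘ π) k := by
  induction hπ using Subgroup.closure_induction with
  | mem σ hσ =>
    intro f
    obtain ⟨u, v, hadj, rfl⟩ := hσ
    refine ⟨1, fun i => if i = 0 then f else f ∘ Equiv.swap u v, by simp, by simp, ?_⟩
    intro i hi
    interval_cases i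
    simpa using swapStep_comp_swap f hadj
  | one =>
    intro f
    exact ⟨0, fun _ => f, rfl, by ext x; simp, by omega⟩
  | mul σ τ _ _ ihσ ihτ =>
    intro f
    obtain ⟨k1, h1⟩ := ihσ f
    obtain ⟨k2, h2⟩ := ihτ (f ∘ σ)
    refine ⟨k1 + k2, ?_⟩
    have : (f ∘ σ) ∘ τ = f ∘ (σ * τ) := by
      ext x; simp [Equiv.Perm.mul_apply]
    exact this ▸ reach_trans h1 h2
  | inv σ _ ihσ =>
    intro f
    obtain ⟨k, h⟩ := ihσ (f ∘ ⇑σ⁻¹)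
    have : (f ∘ ⇑σ⁻¹) ∘ ⇑σ = f := by
      ext x; simp
    rw [this] at h
    exact ⟨k, reach_symm h⟩

lemma counts_of_swapStep {f f' : V → C} (h : SwapStep G f f') (w : V) (a : C) :
    Nat.card {v : V | G.Reachable w v ∧ f v = a} =
    Nat.card {v : V | G.Reachable w v ∧ f' v = a} := by
  classical
  obtain ⟨u, v, hadj, hu, hv, hoth⟩ := h
  have hkey : ∀ x : V, (G.Reachable w (Equiv.swap u v x) ∧ f (Equiv.swap u v x) = a) ↔
      (G.Reachable w x ∧ f' x = a) := by
    intro x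
    by_cases hxu : x = u
    · subst hxu
      rw [Equiv.swap_apply_left, hu]
      exact and_congr_left fun _ =>
        ⟨fun h => h.trans hadj.reachable.symm, fun h => h.trans hadj.reachable⟩
    by_cases hxv : x = v
    · subst hxv
      rw [Equiv.swap_apply_right, hv]
      exact and_congr_left fun _ =>
        ⟨fun h => h.trans hadj.reachable, fun h => h.trans hadj.reachable.symm⟩
    · rw [Equiv.swap_apply_of_ne_of_ne hxu hxv, hoth x hxu hxv]
  exact Nat.card_congr ((Equiv.swap u v).subtypeEquiv fun x => (hkey x).symm).symm

lemma counts_of_reach {f f' : V → C} {k : ℕ} (h : Reach G f f' k) (w : V) (a : C) :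
    Nat.card {v : V | G.Reachable w v ∧ f v = a} =
    Nat.card {v : V | G.Reachable w v ∧ f' v = a} := by
  induction k generalizing f with
  | zero =>
    obtain ⟨g, h0, hk, _⟩ := h
    rw [← h0, hk]
  | succ n ih =>
    obtain ⟨g, h0, hk, hs⟩ := h
    have step : SwapStep G f (g 1) := h0 ▸ hs 0 (by omega)
    have rest : Reach G (g 1) f' n :=
      ⟨fun i => g (i + 1), rfl, hk, fun i hi => hs (i + 1) (by omega)⟩
    rw [counts_of_swapStep step w a, ih rest]

end Aux

/-- A swapping sequence from `f` to `f'` exists if and only if, for every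
connected component of `G` and every color, the numbers of tokens of that color
on the component agree under `f` and `f'`. -/
theorem reach_iff_component_counts {V C : Type*} [Fintype V] (G : SimpleGraph V)
    (f f' : V → C) :
    (∃ k, Reach G f f' k) ↔
      ∀ (w : V) (a : C),
        Nat.card {v : V | G.Reachable w v ∧ f v = a} =
        Nat.card {v : V | G.Reachable w v ∧ f' v = a} := by
  classical
  constructor
  · rintro ⟨k, hk⟩ w a
    exact counts_of_reach hk w a
  · intro h
    -- build a permutation π with f (π x) = f' x and Reachable x (π x)
    set key : (V → C) → V → G.ConnectedComponent × C :=
      fun g v => (G.connectedComponentMk v, g v) with hkeydef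
    have hfib : ∀ p : G.ConnectedComponent × C,
        Nonempty ({v // key f' v = p} ≃ {v // key f v = p}) := by
      rintro ⟨c, a⟩
      induction c using SimpleGraph.ConnectedComponent.ind with
      | _ w =>
      have hset : ∀ g : V → C, {v // key g v = (G.connectedComponentMk w, a)} ≃
          {v : V | G.Reachable w v ∧ g v = a} := by
        intro g
        refine Equiv.subtypeEquivRight fun x => ?_
        constructor
        · intro hx
          have h1 : G.connectedComponentMk x = G.connectedComponentMk w :=
            congrArg Prod.fst hx
          have h2 : g x = a := congrArg Prod.snd hx
          exact ⟨(SimpleGraph.ConnectedComponent.eq.mp h1).symm, h2⟩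
        · rintro ⟨h1, h2⟩
          have : G.connectedComponentMk x = G.connectedComponentMk w :=
            SimpleGraph.ConnectedComponent.eq.mpr h1.symm
          simp only [hkeydef, Prod.mk.injEq]
          exact ⟨this, h2⟩
      rw [Finite.card_eq.symm]
      rw [Nat.card_congr (hset f'), Nat.card_congr (hset f)]
      exact (h w a).symm
    have e : ∀ p : G.ConnectedComponent × C,
        {v // key f' v = p} ≃ {v // key f v = p} := fun p => (hfib p).some
    set π : V ≃ V := Equiv.ofFiberEquiv e with hπdef
    have hπkey : ∀ x, key f (π x) = key f' x := fun x => Equiv.ofFiberEquiv_map e x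
    have hπreach : ∀ x, G.Reachable x (π x) := by
      intro x
      have := congrArg Prod.fst (hπkey x)
      simp only [hkeydef] at this
      exact (SimpleGraph.ConnectedComponent.eq.mp this).symm
    have hπcolor : ∀ x, f (π x) = f' x := by
      intro x
      have := congrArg Prod.snd (hπkey x)
      simpa [hkeydef] using this
    have hmem : π ∈ Subgroup.closure (swapSet G) :=
      perm_mem_closure (Finset.univ.filter fun x => π x ≠ x).card π hπreach le_rfl
    obtain ⟨k, hk⟩ := reach_of_mem_closure hmem f
    have : f ∘ π = f' := funext hπcolor
    exact ⟨k, this ▸ hk⟩
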